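/- Let S be a finite nonempty set of sites in a metric space, k > 0 with k ≤ |S|, and for a finite nonempty set C′ define radius C′ = Max {distance C′ s | s ∈ S} where distance C′ s = Min {dist s c | c ∈ C′}. Suppose C satisfies the invariant: C ≠ ∅, |C| ≤ k, C ⊆ S, and for every finite nonempty C′, either 2·radius C′ < dist c₁ c₂ for all distinct c₁, c₂ ∈ C, or distance C s ≤ 2·radius C′ for all s ∈ S. If additionally k ≤ |C|, then |C| = k and every finite C′ with 0 < |C′| ≤ k satisfies radius C ≤ 2·radius C′. -/

import Mathlib

/-- The distance from a point `s` to the nearest center in `C`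
(the minimum of `dist s c` over `c ∈ C`, for `C` finite and nonempty). -/
noncomputable def distanceTo {α : Type*} [MetricSpace α] (C : Set α) (s : α) : ℝ :=
  sInf ((fun c => dist s c) '' C)

/-- The radius of a set of centers `C'` w.r.t. the sites `S`
(the maximum over `s ∈ S` of the distance from `s` to `C'`). -/
noncomputable def radius {α : Type*} [MetricSpace α] (S C' : Set α) : ℝ :=
  sSup ((fun s => distanceTo C' s) '' S)

/-- The loop invariant of the greedy center selection algorithm. -/
def invar {α : Type*} [MetricSpace α] (S : Set α) (k : ℕ) (C : Set α) : Prop :=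
  C ≠ ∅ ∧ C.ncard ≤ k ∧ C ⊆ S ∧
    ∀ C' : Set α, C'.Finite → C' ≠ ∅ →
      ((∀ c₁ ∈ C, ∀ c₂ ∈ C, c₁ ≠ c₂ → 2 * radius S C' < dist c₁ c₂) ∨
       (∀ s ∈ S, distanceTo C s ≤ 2 * radius S C'))

/-! If the centers of `C` are pairwise more than `2 r` apart and every one of them lies within
`r` of some center of `C'`, then no two of them share a nearest center in `C'`. When
`|C'| ≤ |C|` every center of `C'` is therefore within `r` of `C`, and every site, being within
`r` of `C'`, is within `2 r` of `C`. In the other branch of the invariant this bound holds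
outright. -/

section

variable {α : Type*} [MetricSpace α]

lemma exists_mem_distanceTo_eq {C : Set α} (hC : C.Finite) (hne : C.Nonempty) (s : α) :
    ∃ c ∈ C, distanceTo C s = dist s c := by
  obtain ⟨c, hc, hmin⟩ := (hne.image _).csInf_mem (hC.image fun c => dist s c)
  exact ⟨c, hc, hmin.symm⟩

lemma distanceTo_le_dist {C : Set α} {c : α} (hc : c ∈ C) (s : α) :
    distanceTo C s ≤ dist s c :=
  csInf_le ⟨0, by rintro _ ⟨_, _, rfl⟩; exact dist_nonneg⟩ ⟨c, hc, rfl⟩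

lemma distanceTo_nonneg (C : Set α) (s : α) : 0 ≤ distanceTo C s :=
  Real.sInf_nonneg <| by rintro _ ⟨_, _, rfl⟩; exact dist_nonneg

lemma distanceTo_le_radius {S : Set α} (hS : S.Finite) (C : Set α) {s : α} (hs : s ∈ S) :
    distanceTo C s ≤ radius S C :=
  le_csSup (hS.image _).bddAbove ⟨s, hs, rfl⟩

lemma radius_nonneg (S C : Set α) : 0 ≤ radius S C :=
  Real.sSup_nonneg <| by rintro _ ⟨s, _, rfl⟩; exact distanceTo_nonneg C s

lemma radius_le {S C : Set α} {r : ℝ} (h : ∀ s ∈ S, distanceTo C s ≤ r) (hr : 0 ≤ r) :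
    radius S C ≤ r :=
  Real.sSup_le (by rintro _ ⟨s, hs, rfl⟩; exact h s hs) hr

lemma exists_dist_le_of_pairwise_far {C C' : Set α} {r : ℝ} (hC' : C'.Finite)
    (hcard : C'.ncard ≤ C.ncard) (hcover : ∀ c ∈ C, ∃ c' ∈ C', dist c c' ≤ r)
    (hsep : C.Pairwise fun c₁ c₂ => 2 * r < dist c₁ c₂) :
    ∀ c' ∈ C', ∃ c ∈ C, dist c c' ≤ r := by
  choose! f hfC' hf using hcover
  have hinj : C.InjOn f := by
    intro a ha b hb hab
    by_contra hne
    have : dist a b ≤ 2 * r :=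
      calc dist a b ≤ dist a (f a) + dist (f b) b := by
            rw [hab]; exact dist_triangle _ _ _
        _ ≤ r + r := add_le_add (hf a ha) (by rw [dist_comm]; exact hf b hb)
        _ = 2 * r := (two_mul r).symm
    exact (hsep ha hb hne).not_ge this
  have himage : f '' C = C' :=
    Set.eq_of_subset_of_ncard_le (Set.mapsTo_iff_image_subset.mp hfC')
      (by rwa [hinj.ncard_image]) hC'
  rintro c' hc'
  rw [← himage] at hc'
  obtain ⟨c, hc, rfl⟩ := hc'
  exact ⟨c, hc, hf c hc⟩

lemma distanceTo_le_two_mul_radius_of_pairwise_far {S C C' : Set α} (hS : S.Finite)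
    (hCS : C ⊆ S) (hC' : C'.Finite) (hC'ne : C'.Nonempty) (hcard : C'.ncard ≤ C.ncard)
    (hsep : C.Pairwise fun c₁ c₂ => 2 * radius S C' < dist c₁ c₂) {s : α} (hs : s ∈ S) :
    distanceTo C s ≤ 2 * radius S C' := by
  set r := radius S C'
  have hnear : ∀ x ∈ S, ∃ c' ∈ C', dist x c' ≤ r := fun x hx => by
    obtain ⟨c', hc', hx_eq⟩ := exists_mem_distanceTo_eq hC' hC'ne x
    exact ⟨c', hc', hx_eq ▸ distanceTo_le_radius hS C' hx⟩
  obtain ⟨c', hc', hsc'⟩ := hnear s hs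
  obtain ⟨c, hc, hcc'⟩ := exists_dist_le_of_pairwise_far hC' hcard
    (fun c hc => hnear c (hCS hc)) hsep c' hc'
  calc distanceTo C s ≤ dist s c := distanceTo_le_dist hc s
    _ ≤ dist s c' + dist c c' := dist_triangle_right _ _ _
    _ ≤ r + r := add_le_add hsc' hcc'
    _ = 2 * r := (two_mul r).symm

end

theorem stmt_15_general {α : Type*} [MetricSpace α] (S : Set α)
    (hSfin : S.Finite)
    (k : ℕ)
    (C : Set α) (hinv : invar S k C) (hkC : k ≤ C.ncard) :
    C.ncard = k ∧
      ∀ C' : Set α, C'.Finite → 0 < C'.ncard → C'.ncard ≤ k →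
        radius S C ≤ 2 * radius S C' := by
  obtain ⟨-, hCk, hCS, hdichotomy⟩ := hinv
  refine ⟨le_antisymm hCk hkC, fun C' hC' hpos hC'k => ?_⟩
  have hC'ne : C'.Nonempty := (Set.ncard_pos hC').mp hpos
  refine radius_le (fun s hs => ?_) (mul_nonneg zero_le_two (radius_nonneg S C'))
  rcases hdichotomy C' hC' hC'ne.ne_empty with hsep | hclose
  · exact distanceTo_le_two_mul_radius_of_pairwise_far hSfin hCS hC' hC'ne (hC'k.trans hkC)
      hsep hs
  · exact hclose s hs

theorem stmt_15 {α : Type*} [MetricSpace α] (S : Set α)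
    (hSfin : S.Finite) (hSne : S.Nonempty)
    (k : ℕ) (hk : 0 < k) (hkS : k ≤ S.ncard)
    (C : Set α) (hinv : invar S k C) (hkC : k ≤ C.ncard) :
    C.ncard = k ∧
      ∀ C' : Set α, C'.Finite → 0 < C'.ncard → C'.ncard ≤ k →
        radius S C ≤ 2 * radius S C' :=
  stmt_15_general S hSfin k C hinv hkC
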